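/- arXiv:2003.08995 — 9 statements merged into one kernel-verified Lean document; each statement's English description precedes it below -/
import Mathlib

section
/- Let 0 < m ≤ 1, n > 0, and λ ∈ ℝ. Assume that one of the following holds: (i) λ > −1 and n = m + 1; (ii) λ ≥ 0 and n ≥ 1; (iii) 0 < λ < 1 and n = m; (iv) λ ≤ 0 and n ≤ 1. Then (1−m)·s^m + m·s^(m+1) + λ·(n−1)·s^n > 0 for every s > 0. -/
/-! With `f(s) = s^m - s^(m+1) - λ s^n`, the quantity `f(s) - s f'(s)` has three terms, two
of which are always harmless: `(1 - m) s^m ≥ 0` and `m s^(m+1) > 0`. In cases (ii) and (iv) the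
coefficient `λ (n - 1)` of the third term is nonnegative; in cases (i) and (iii) the third term is
a multiple of `s^(m+1)`, resp. `s^m`, and merges with it into a positive, resp. nonnegative, term. -/

open Real

lemma rpow_combination_pos {s a b c : ℝ} (p q r : ℝ) (hs : 0 < s) (ha : 0 ≤ a) (hb : 0 < b)
    (hc : 0 ≤ c) : 0 < a * s ^ p + b * s ^ q + c * s ^ r :=
  add_pos_of_pos_of_nonneg
    (add_pos_of_nonneg_of_pos (mul_nonneg ha (rpow_pos_of_pos hs p).le)
      (mul_pos hb (rpow_pos_of_pos hs q)))
    (mul_nonneg hc (rpow_pos_of_pos hs r).le)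

theorem stmt_4_general (m n lam : ℝ) (hm1 : 0 < m) (hm2 : m ≤ 1)
    (hcase : (lam > -1 ∧ n = m + 1) ∨ (lam ≥ 0 ∧ n ≥ 1) ∨
      (0 < lam ∧ lam < 1 ∧ n = m) ∨ (lam ≤ 0 ∧ n ≤ 1)) :
    ∀ s > (0 : ℝ), (1 - m) * s ^ m + m * s ^ (m + 1) + lam * (n - 1) * s ^ n > 0 := by
  intro s hs
  have h1m : 0 ≤ 1 - m := sub_nonneg.2 hm2
  rcases hcase with ⟨hlam, rfl⟩ | ⟨hlam, hn⟩ | ⟨-, hlam, hnm⟩ | ⟨hlam, hn⟩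
  · have h := rpow_combination_pos m (m + 1) (m + 1) hs h1m
      (mul_pos hm1 (by linarith : 0 < 1 + lam)) le_rfl
    linear_combination h
  · exact rpow_combination_pos m (m + 1) n hs h1m hm1 (mul_nonneg hlam (by linarith))
  · subst n
    have h := rpow_combination_pos m (m + 1) m hs
      (mul_nonneg h1m (by linarith : 0 ≤ 1 - lam)) hm1 le_rfl
    linear_combination h
  · exact rpow_combination_pos m (m + 1) n hs h1m hm1
      (mul_nonneg_of_nonpos_of_nonpos hlam (by linarith))

theorem stmt_4 (m n lam : ℝ) (hm1 : 0 < m) (hm2 : m ≤ 1) (hn : 0 < n)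
    (hcase : (lam > -1 ∧ n = m + 1) ∨ (lam ≥ 0 ∧ n ≥ 1) ∨
      (0 < lam ∧ lam < 1 ∧ n = m) ∨ (lam ≤ 0 ∧ n ≤ 1)) :
    ∀ s > (0 : ℝ), (1 - m) * s ^ m + m * s ^ (m + 1) + lam * (n - 1) * s ^ n > 0 :=
  stmt_4_general m n lam hm1 hm2 hcase
end

section
/- Let 0 < n < m < 1 and λ > 0. If there exists M > 0 such that M^m − M^(m+1) − λ·M^n ≥ 0, then λ ≤ (m−n)^(m−n)/(m−n+1)^(m−n+1). -/
/-!
Dividing the inequality by `M ^ n` gives `λ ≤ M ^ p * (1 - M)` with `p = m - n`, and the maximum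
of `M ^ p * (1 - M)` over `M ≥ 0` is `p ^ p / (p + 1) ^ (p + 1)`, attained at `M = p / (p + 1)`.
-/

lemma rpow_mul_one_sub_le {p M : ℝ} (hp : 0 < p) (hM : 0 ≤ M) :
    M ^ p * (1 - M) ≤ p ^ p / (p + 1) ^ (p + 1) := by
  have hp1 : 0 < p + 1 := by linarith
  rcases le_or_gt 1 M with hM1 | hM1
  · calc M ^ p * (1 - M) ≤ 0 := mul_nonpos_of_nonneg_of_nonpos (by positivity) (by linarith)
      _ ≤ _ := by positivity
  -- weighted AM-GM at the points `M / p` and `1 - M`, whose weighted mean is `1 / (p + 1)`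
  have amgm : (M / p) ^ (p / (p + 1)) * (1 - M) ^ (1 / (p + 1)) ≤ 1 / (p + 1) := by
    convert Real.geom_mean_le_arith_mean2_weighted (w₁ := p / (p + 1)) (w₂ := 1 / (p + 1))
      (by positivity) (by positivity) (div_nonneg hM hp.le) (sub_nonneg.2 hM1.le)
      (by field_simp) using 1
    field_simp
    ring
  have hpow : (M / p) ^ p * (1 - M) ≤ 1 / (p + 1) ^ (p + 1) := by
    have := Real.rpow_le_rpow (by positivity) amgm hp1.le
    rwa [Real.mul_rpow (by positivity) (by positivity), ← Real.rpow_mul (by positivity),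
      ← Real.rpow_mul (by linarith), div_mul_cancel₀ p hp1.ne', one_div_mul_cancel hp1.ne',
      Real.rpow_one, Real.div_rpow zero_le_one hp1.le, Real.one_rpow] at this
  rwa [Real.div_rpow hM hp.le, div_mul_eq_mul_div, div_le_div_iff₀ (by positivity) (by positivity),
    one_mul, ← le_div_iff₀ (by positivity)] at hpow

theorem stmt_8_general (m n lam : ℝ) (hnm : n < m)
    (h : ∃ M > (0 : ℝ), M ^ m - M ^ (m + 1) - lam * M ^ n ≥ 0) :
    lam ≤ (m - n) ^ (m - n) / (m - n + 1) ^ (m - n + 1) := by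
  obtain ⟨M, hM, hsol⟩ := h
  have hfactor :
      M ^ m - M ^ (m + 1) - lam * M ^ n = M ^ n * (M ^ (m - n) * (1 - M) - lam) := by
    rw [Real.rpow_add hM, Real.rpow_one, Real.rpow_sub hM]
    field_simp
  rw [hfactor] at hsol
  have hlam : 0 ≤ M ^ (m - n) * (1 - M) - lam :=
    nonneg_of_mul_nonneg_right hsol (Real.rpow_pos_of_pos hM n)
  linarith [rpow_mul_one_sub_le (sub_pos.2 hnm) hM.le]

theorem stmt_8 (m n lam : ℝ) (hn : 0 < n) (hnm : n < m) (hm : m < 1) (hlam : 0 < lam)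
    (h : ∃ M > (0 : ℝ), M ^ m - M ^ (m + 1) - lam * M ^ n ≥ 0) :
    lam ≤ (m - n) ^ (m - n) / (m - n + 1) ^ (m - n + 1) :=
  stmt_8_general m n lam hnm h
end

section
/- Let N ≥ 1 be an integer, let 0 < n < m < 1, and let θ ∈ (0,1) satisfy 1/(m+1) = (1−θ)·(1/2 − 1/N) + θ/(n+1). Then n < ((N+2)(2m−1) − (N−2)m²)/4 if and only if m + 1 > ((n+1)/θ)·(2/(m+1) − 1 + θ). -/
/-!
Clearing denominators in the interpolation identity gives
`θ (m+1) (N+2 - (N-2) n) = (n+1) (N+2 - (N-2) m)`.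
The exponent comparison is equivalent to `(n+1)(1-m) < θ (m+1)(m-n)`; multiplying by
`N+2 - (N-2) n > 0` and substituting the identity removes `θ`, leaving the polynomial
inequality `(1-m)(N+2-(N-2)n) < (N+2-(N-2)m)(m-n)`, whose difference of sides is exactly
`(N+2)(2m-1) - (N-2)m² - 4n`.
-/

namespace GagliardoNirenberg

variable {N m n θ : ℝ}

theorem interpolation_exponent_eq (hN : N ≠ 0) (hm : m + 1 ≠ 0) (hn : n + 1 ≠ 0)
    (hθ : 1 / (m + 1) = (1 - θ) * (1 / 2 - 1 / N) + θ / (n + 1)) :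
    θ * (m + 1) * (N + 2 - (N - 2) * n) = (n + 1) * (N + 2 - (N - 2) * m) := by
  field_simp at hθ
  linear_combination -hθ

theorem mountainPass_exponent_iff (hθ : 0 < θ) (hm : 0 < m + 1) :
    m + 1 > ((n + 1) / θ) * (2 / (m + 1) - 1 + θ) ↔ (n + 1) * (1 - m) < θ * (m + 1) * (m - n) := by
  have hexpand : ((n + 1) / θ) * (2 / (m + 1) - 1 + θ)
      = ((n + 1) * (1 - m) + θ * (m + 1) * (n + 1)) / (θ * (m + 1)) := by
    field_simp
    ring
  rw [gt_iff_lt, hexpand, div_lt_iff₀ (by positivity)]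
  constructor <;> intro h <;> linarith

theorem mul_sub_lt_iff_of_exponent_eq (hn : 0 < n + 1) (hD : 0 < N + 2 - (N - 2) * n)
    (hθ : θ * (m + 1) * (N + 2 - (N - 2) * n) = (n + 1) * (N + 2 - (N - 2) * m)) :
    (n + 1) * (1 - m) < θ * (m + 1) * (m - n) ↔
      n < ((N + 2) * (2 * m - 1) - (N - 2) * m ^ 2) / 4 := by
  calc (n + 1) * (1 - m) < θ * (m + 1) * (m - n)
      ↔ (n + 1) * ((1 - m) * (N + 2 - (N - 2) * n))
          < θ * (m + 1) * (N + 2 - (N - 2) * n) * (m - n) := by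
        rw [← mul_lt_mul_iff_of_pos_right hD]
        constructor <;> intro h <;> linarith
    _ ↔ (n + 1) * ((1 - m) * (N + 2 - (N - 2) * n))
          < (n + 1) * ((N + 2 - (N - 2) * m) * (m - n)) := by
        rw [hθ, mul_assoc]
    _ ↔ (1 - m) * (N + 2 - (N - 2) * n) < (N + 2 - (N - 2) * m) * (m - n) :=
        mul_lt_mul_iff_of_pos_left hn
    _ ↔ n < ((N + 2) * (2 * m - 1) - (N - 2) * m ^ 2) / 4 := by
        constructor <;> intro h <;> linarith

end GagliardoNirenberg

theorem stmt_9_general (N : ℕ) (hN : 1 ≤ N) (m n θ : ℝ) (hn : 0 < n) (hnm : n < m) (hm : m < 1)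
    (hθ1 : 0 < θ)
    (hθ : 1 / (m + 1) = (1 - θ) * (1 / 2 - 1 / (N : ℝ)) + θ / (n + 1)) :
    n < (((N : ℝ) + 2) * (2 * m - 1) - ((N : ℝ) - 2) * m ^ 2) / 4 ↔
      m + 1 > ((n + 1) / θ) * (2 / (m + 1) - 1 + θ) := by
  have hNpos : (0 : ℝ) < N := by exact_mod_cast hN
  have hm1 : (0 : ℝ) < m + 1 := by linarith
  have hn1 : (0 : ℝ) < n + 1 := by linarith
  have hD : (0 : ℝ) < N + 2 - (N - 2) * n := by nlinarith
  have hexp := GagliardoNirenberg.interpolation_exponent_eq hNpos.ne' hm1.ne' hn1.ne' hθ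
  rw [GagliardoNirenberg.mountainPass_exponent_iff hθ1 hm1,
    GagliardoNirenberg.mul_sub_lt_iff_of_exponent_eq hn1 hD hexp]

theorem stmt_9 (N : ℕ) (hN : 1 ≤ N) (m n θ : ℝ) (hn : 0 < n) (hnm : n < m) (hm : m < 1)
    (hθ1 : 0 < θ) (hθ2 : θ < 1)
    (hθ : 1 / (m + 1) = (1 - θ) * (1 / 2 - 1 / (N : ℝ)) + θ / (n + 1)) :
    n < (((N : ℝ) + 2) * (2 * m - 1) - ((N : ℝ) - 2) * m ^ 2) / 4 ↔
      m + 1 > ((n + 1) / θ) * (2 / (m + 1) - 1 + θ) :=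
  stmt_9_general N hN m n θ hn hnm hm hθ1 hθ
end

section
/- Let 0 < m < 1 < n < m + 1 and A₁, A₂, A₃ > 0. Set λ̲ = −(n−1)^((n−1)/(1−m))·(1−m) / (2^((n−m)/(1−m))·(n−m)^((n−m)/(1−m))·A₁^((n−1)/(1−m))·A₂), λ̄ = −m·A₃^((n−1)/m) / (2^((m+1−n)/m)·(n−1)^((n−1)/m)·(m+1−n)^((m+1−n)/m)·A₂), s_λ = ((1−m)/(−2λ(n−m)A₂))^(1/(n−1)) and ŝ_λ = (−λ(n−1)A₂/(m·A₃))^(1/(m+1−n)). If A₁^(1/(1−m))·A₃^(1/m) < C̃, where C̃ = ((n−1)/2)^(1/(m(1−m)))·((1−m)/m)^(1/(n−1))·(m+1−n)^((m+1−n)/(m(n−1))) / (n−m)^((n−m)/((1−m)(n−1))), then λ̲ < λ̄ and s_{λ̲} < ŝ_{λ̄}. -/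
/-!
Every quantity involved is a product of real powers of positive constants, so after taking
logarithms each claim becomes a linear identity between logarithms. The inequality `λ̲ < λ̄` is
the smallness condition raised to the power `n - 1`. At the thresholds the critical points have
the closed forms `s_λ̲ = (2(n-m)A₁/(n-1))^(1/(1-m))` and `ŝ_λ̄ = ((n-1)/(2(m+1-n)A₃))^(1/m)`, and
`s_λ̲ < ŝ_λ̄` says that `A₁^(1/(1-m)) A₃^(1/m)` lies below a bound exceeding `C̃` by the factor
`(m(n-m)/((1-m)(m+1-n)))^(1/(n-1)) > 1`.
-/

open Real

noncomputable def lambdaLower (m n A₁ A₂ : ℝ) : ℝ :=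
  -((n - 1) ^ ((n - 1) / (1 - m)) * (1 - m)) /
    (2 ^ ((n - m) / (1 - m)) * (n - m) ^ ((n - m) / (1 - m)) * A₁ ^ ((n - 1) / (1 - m)) * A₂)

noncomputable def lambdaUpper (m n A₂ A₃ : ℝ) : ℝ :=
  -(m * A₃ ^ ((n - 1) / m)) /
    (2 ^ ((m + 1 - n) / m) * (n - 1) ^ ((n - 1) / m) * (m + 1 - n) ^ ((m + 1 - n) / m) * A₂)

/-- The critical point `s_λ` of `g_λ(s) = s^(1-m)/2 - A₁ + λ A₂ s^(n-m)`. -/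
noncomputable def maxPointG (m n A₂ lam : ℝ) : ℝ :=
  ((1 - m) / (-2 * lam * (n - m) * A₂)) ^ (1 / (n - 1))

/-- The critical point `ŝ_λ` of `f_λ(s) = 1/2 + A₃ s^m + λ A₂ s^(n-1)`. -/
noncomputable def minPointF (m n A₂ A₃ lam : ℝ) : ℝ :=
  (-lam * (n - 1) * A₂ / (m * A₃)) ^ (1 / (m + 1 - n))

noncomputable def smallnessBound (m n : ℝ) : ℝ :=
  ((n - 1) / 2) ^ (1 / (m * (1 - m))) * ((1 - m) / m) ^ (1 / (n - 1)) *
    (m + 1 - n) ^ ((m + 1 - n) / (m * (n - 1))) / (n - m) ^ ((n - m) / ((1 - m) * (n - 1)))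

theorem lt_iff_lt_of_log_sub_log_eq_mul {x y u v c : ℝ} (hx : 0 < x) (hy : 0 < y) (hu : 0 < u)
    (hv : 0 < v) (hc : 0 < c) (h : log y - log x = c * (log v - log u)) : x < y ↔ u < v := by
  rw [← log_lt_log_iff hx hy, ← log_lt_log_iff hu hv, ← sub_pos, h, mul_pos_iff_of_pos_left hc,
    sub_pos]

variable {m n A₁ A₂ A₃ : ℝ}

theorem lambdaLower_lt_lambdaUpper_iff (hm1 : 0 < m) (hm2 : m < 1) (hn1 : 1 < n)
    (hn2 : n < m + 1) (hA₁ : 0 < A₁) (hA₂ : 0 < A₂) (hA₃ : 0 < A₃) :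
    lambdaLower m n A₁ A₂ < lambdaUpper m n A₂ A₃ ↔
      A₁ ^ (1 / (1 - m)) * A₃ ^ (1 / m) < smallnessBound m n := by
  have ha : 0 < 1 - m := by linarith
  have hb : 0 < n - 1 := by linarith
  have hc : 0 < m + 1 - n := by linarith
  have hd : 0 < n - m := by linarith
  unfold lambdaLower lambdaUpper
  rw [div_lt_div_iff₀ (by positivity) (by positivity), neg_mul, neg_mul, neg_lt_neg_iff]
  refine lt_iff_lt_of_log_sub_log_eq_mul (by positivity) (by positivity) (by positivity)
    (by unfold smallnessBound; positivity) hb ?_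
  unfold smallnessBound
  simp (disch := positivity) only [log_mul, log_div, log_rpow]
  field_simp
  ring

theorem maxPointG_lambdaLower (hm2 : m < 1) (hn1 : 1 < n) (hA₁ : 0 < A₁) (hA₂ : 0 < A₂) :
    maxPointG m n A₂ (lambdaLower m n A₁ A₂) = (2 * (n - m) * A₁ / (n - 1)) ^ (1 / (1 - m)) := by
  have ha : 0 < 1 - m := by linarith
  have hb : 0 < n - 1 := by linarith
  have hd : 0 < n - m := by linarith
  unfold maxPointG lambdaLower
  rw [neg_div, neg_mul_neg]
  refine log_injOn_pos (Set.mem_Ioi.2 (by positivity)) (Set.mem_Ioi.2 (by positivity)) ?_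
  simp (disch := positivity) only [log_mul, log_div, log_rpow]
  field_simp
  ring

theorem minPointF_lambdaUpper (hm1 : 0 < m) (hn1 : 1 < n) (hn2 : n < m + 1) (hA₂ : 0 < A₂)
    (hA₃ : 0 < A₃) :
    minPointF m n A₂ A₃ (lambdaUpper m n A₂ A₃) = ((n - 1) / (2 * (m + 1 - n) * A₃)) ^ (1 / m) := by
  have hb : 0 < n - 1 := by linarith
  have hc : 0 < m + 1 - n := by linarith
  unfold minPointF lambdaUpper
  rw [neg_div, neg_neg]
  refine log_injOn_pos (Set.mem_Ioi.2 (by positivity)) (Set.mem_Ioi.2 (by positivity)) ?_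
  simp (disch := positivity) only [log_mul, log_div, log_rpow]
  field_simp
  ring

theorem rpow_lt_rpow_iff_lt_bound (hm1 : 0 < m) (hm2 : m < 1) (hn1 : 1 < n) (hn2 : n < m + 1)
    (hA₁ : 0 < A₁) (hA₃ : 0 < A₃) :
    (2 * (n - m) * A₁ / (n - 1)) ^ (1 / (1 - m)) < ((n - 1) / (2 * (m + 1 - n) * A₃)) ^ (1 / m) ↔
      A₁ ^ (1 / (1 - m)) * A₃ ^ (1 / m) <
        ((n - 1) / 2) ^ (1 / (m * (1 - m))) / ((n - m) ^ (1 / (1 - m)) * (m + 1 - n) ^ (1 / m)) := by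
  have ha : 0 < 1 - m := by linarith
  have hb : 0 < n - 1 := by linarith
  have hc : 0 < m + 1 - n := by linarith
  have hd : 0 < n - m := by linarith
  refine lt_iff_lt_of_log_sub_log_eq_mul (by positivity) (by positivity) (by positivity)
    (by positivity) one_pos ?_
  simp (disch := positivity) only [log_mul, log_div, log_rpow]
  field_simp
  ring

theorem smallnessBound_lt (hm1 : 0 < m) (hm2 : m < 1) (hn1 : 1 < n) (hn2 : n < m + 1) :
    smallnessBound m n <
      ((n - 1) / 2) ^ (1 / (m * (1 - m))) / ((n - m) ^ (1 / (1 - m)) * (m + 1 - n) ^ (1 / m)) := by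
  have ha : 0 < 1 - m := by linarith
  have hb : 0 < n - 1 := by linarith
  have hc : 0 < m + 1 - n := by linarith
  have hd : 0 < n - m := by linarith
  -- `m(n-m) - (1-m)(m+1-n) = n - 1`
  have hprod : (1 - m) * (m + 1 - n) < m * (n - m) := by nlinarith
  refine (lt_iff_lt_of_log_sub_log_eq_mul (by unfold smallnessBound; positivity) (by positivity)
    (by positivity) (by positivity) (one_div_pos.2 hb) ?_).2 hprod
  unfold smallnessBound
  simp (disch := positivity) only [log_mul, log_div, log_rpow]
  field_simp
  ring

theorem stmt_14 (m n A₁ A₂ A₃ : ℝ) (hm1 : 0 < m) (hm2 : m < 1) (hn1 : 1 < n)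
    (hn2 : n < m + 1) (hA₁ : 0 < A₁) (hA₂ : 0 < A₂) (hA₃ : 0 < A₃)
    (hsmall : A₁ ^ (1 / (1 - m)) * A₃ ^ (1 / m) <
      ((n - 1) / 2) ^ (1 / (m * (1 - m))) * ((1 - m) / m) ^ (1 / (n - 1)) *
        (m + 1 - n) ^ ((m + 1 - n) / (m * (n - 1))) / (n - m) ^ ((n - m) / ((1 - m) * (n - 1)))) :
    let lamLow : ℝ := -((n - 1) ^ ((n - 1) / (1 - m)) * (1 - m)) /
      (2 ^ ((n - m) / (1 - m)) * (n - m) ^ ((n - m) / (1 - m)) * A₁ ^ ((n - 1) / (1 - m)) * A₂)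
    let lamHigh : ℝ := -(m * A₃ ^ ((n - 1) / m)) /
      (2 ^ ((m + 1 - n) / m) * (n - 1) ^ ((n - 1) / m) * (m + 1 - n) ^ ((m + 1 - n) / m) * A₂)
    lamLow < lamHigh ∧
      ((1 - m) / (-2 * lamLow * (n - m) * A₂)) ^ (1 / (n - 1)) <
        (-lamHigh * (n - 1) * A₂ / (m * A₃)) ^ (1 / (m + 1 - n)) := by
  intro lamLow lamHigh
  refine ⟨(lambdaLower_lt_lambdaUpper_iff hm1 hm2 hn1 hn2 hA₁ hA₂ hA₃).2 hsmall, ?_⟩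
  change maxPointG m n A₂ (lambdaLower m n A₁ A₂) < minPointF m n A₂ A₃ (lambdaUpper m n A₂ A₃)
  rw [maxPointG_lambdaLower hm2 hn1 hA₁ hA₂, minPointF_lambdaUpper hm1 hn1 hn2 hA₂ hA₃,
    rpow_lt_rpow_iff_lt_bound hm1 hm2 hn1 hn2 hA₁ hA₃]
  exact hsmall.trans (smallnessBound_lt hm1 hm2 hn1 hn2)
end

section
/- Let 0 < m < 1, a > 0, and λ < −1 − a^(1/(1−m))·(1−m)·m^(m/(1−m)). Then a·s^(1−m) + (λ+1)·s − 1 < 0 for every s > 0. -/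
/-!
Weighted AM–GM with weights `1 - m` and `m`, applied to `x = a^(1/(1-m)) m^(m/(1-m)) s` and `1/m`,
bounds the concave term: `a s^(1-m) ≤ T s + 1` with `T = a^(1/(1-m)) (1-m) m^(m/(1-m))`
(equality at the maximiser of `a s^(1-m) - T s`). Hence for `λ + 1 < -T` the left-hand side is
at most `(λ + 1 + T) s < 0`.
-/

open Real

theorem mul_rpow_one_sub_le_mul_add_one {m a s : ℝ} (hm1 : 0 < m) (hm2 : m < 1) (ha : 0 ≤ a)
    (hs : 0 ≤ s) :
    a * s ^ (1 - m) ≤ a ^ (1 / (1 - m)) * (1 - m) * m ^ (m / (1 - m)) * s + 1 := by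
  have hb : 0 < 1 - m := by linarith
  set x := a ^ (1 / (1 - m)) * m ^ (m / (1 - m)) * s
  have hx : 0 ≤ x := by positivity
  have hpow : x ^ (1 - m) * (1 / m) ^ m = a * s ^ (1 - m) := by
    have hmm : 0 < m ^ m := rpow_pos_of_pos hm1 m
    rw [mul_rpow (by positivity) hs, mul_rpow (by positivity) (by positivity),
      ← rpow_mul ha, ← rpow_mul hm1.le, one_div_mul_cancel hb.ne', div_mul_cancel₀ m hb.ne',
      rpow_one, one_div, inv_rpow hm1.le]
    field_simp
  calc a * s ^ (1 - m) = x ^ (1 - m) * (1 / m) ^ m := hpow.symm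
    _ ≤ (1 - m) * x + m * (1 / m) :=
      geom_mean_le_arith_mean2_weighted hb.le hm1.le hx (by positivity) (by ring)
    _ = a ^ (1 / (1 - m)) * (1 - m) * m ^ (m / (1 - m)) * s + 1 := by
      field_simp
      ring

theorem stmt_15 (m a lam : ℝ) (hm1 : 0 < m) (hm2 : m < 1) (ha : 0 < a)
    (hlam : lam < -1 - a ^ (1 / (1 - m)) * (1 - m) * m ^ (m / (1 - m))) :
    ∀ s > (0 : ℝ), a * s ^ (1 - m) + (lam + 1) * s - 1 < 0 := by
  intro s hs
  have hbound := mul_rpow_one_sub_le_mul_add_one hm1 hm2 ha.le hs.le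
  nlinarith [mul_lt_mul_of_pos_right hlam hs]
end

section
/- Let 0 < n < 1, 0 < a < 1, and λ > (a^(2−n)·(1−n)^(1−n))/(2−n)^(2−n). Then −a·s^(1−n) + s^(2−n) + λ > 0 for every s > 0. -/
/-!
With `p = 1 - n`, the expression equals `λ - s ^ p * (a - s)`, and weighted AM-GM with weights
`p / (p + 1)` and `1 / (p + 1)` applied to `s / p` and `a - s` shows that
`s ^ p * (a - s) ≤ a ^ (p + 1) * p ^ p / (p + 1) ^ (p + 1)`, the value at the maximiser
`s = p a / (p + 1)`.
-/

namespace Real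

theorem div_rpow_mul_le_add_div_rpow {p x y : ℝ} (hp : 0 < p) (hx : 0 ≤ x) (hy : 0 ≤ y) :
    (x / p) ^ p * y ≤ ((x + y) / (p + 1)) ^ (p + 1) := by
  have hq : 0 < p + 1 := by linarith
  have hxp : 0 ≤ x / p := by positivity
  have amgm : (x / p) ^ (p / (p + 1)) * y ^ (1 / (p + 1)) ≤ (x + y) / (p + 1) := by
    calc (x / p) ^ (p / (p + 1)) * y ^ (1 / (p + 1))
        ≤ p / (p + 1) * (x / p) + 1 / (p + 1) * y :=
          geom_mean_le_arith_mean2_weighted (by positivity) (by positivity) hxp hy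
            (by field_simp)
      _ = (x + y) / (p + 1) := by field_simp
  calc (x / p) ^ p * y
      = ((x / p) ^ (p / (p + 1)) * y ^ (1 / (p + 1))) ^ (p + 1) := by
        rw [mul_rpow (by positivity) (by positivity), ← rpow_mul hxp, ← rpow_mul hy,
          div_mul_cancel₀ _ hq.ne', one_div_mul_cancel hq.ne', rpow_one]
    _ ≤ ((x + y) / (p + 1)) ^ (p + 1) := rpow_le_rpow (by positivity) amgm hq.le

theorem rpow_mul_sub_le {p a s : ℝ} (hp : 0 < p) (ha : 0 ≤ a) (hs : 0 ≤ s) :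
    s ^ p * (a - s) ≤ a ^ (p + 1) * p ^ p / (p + 1) ^ (p + 1) := by
  rcases le_or_gt s a with hsa | has
  · calc s ^ p * (a - s)
        = p ^ p * ((s / p) ^ p * (a - s)) := by
          rw [div_rpow hs hp.le]
          field_simp
      _ ≤ p ^ p * ((s + (a - s)) / (p + 1)) ^ (p + 1) := by
          gcongr
          exact div_rpow_mul_le_add_div_rpow hp hs (by linarith)
      _ = a ^ (p + 1) * p ^ p / (p + 1) ^ (p + 1) := by
          rw [add_sub_cancel, div_rpow ha (by linarith)]
          ring
  · calc s ^ p * (a - s) ≤ 0 :=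
          mul_nonpos_of_nonneg_of_nonpos (rpow_nonneg hs p) (by linarith)
      _ ≤ a ^ (p + 1) * p ^ p / (p + 1) ^ (p + 1) := by positivity

end Real

theorem stmt_16_general (n a lam : ℝ) (hn2 : n < 1) (ha1 : 0 < a)
    (hlam : lam > a ^ (2 - n) * (1 - n) ^ (1 - n) / (2 - n) ^ (2 - n)) :
    ∀ s > (0 : ℝ), -a * s ^ (1 - n) + s ^ (2 - n) + lam > 0 := by
  intro s hs
  have htwo : 2 - n = (1 - n) + 1 := by ring
  have hsplit : s ^ (2 - n) = s ^ (1 - n) * s := by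
    rw [htwo, Real.rpow_add_one hs.ne']
  have hmax := Real.rpow_mul_sub_le (p := 1 - n) (by linarith) ha1.le hs.le
  rw [← htwo] at hmax
  rw [hsplit]
  linarith

theorem stmt_16 (n a lam : ℝ) (hn1 : 0 < n) (hn2 : n < 1) (ha1 : 0 < a) (ha2 : a < 1)
    (hlam : lam > a ^ (2 - n) * (1 - n) ^ (1 - n) / (2 - n) ^ (2 - n)) :
    ∀ s > (0 : ℝ), -a * s ^ (1 - n) + s ^ (2 - n) + lam > 0 :=
  stmt_16_general n a lam hn2 ha1 hlam
end

section
/- Let 1 < n < 2, b > 0, and let λ satisfy −b^(2−n)/((n−1)^(n−1)·(2−n)^(2−n)) < λ < 0. Then b + s + λ·s^(n−1) > 0 for every s > 0. -/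
/-! Weighted AM-GM with weights `n - 1` and `2 - n`, applied to `s / (n - 1)` and `b / (2 - n)`,
gives `s ^ (n - 1) * b ^ (2 - n) ≤ (n - 1) ^ (n - 1) * (2 - n) ^ (2 - n) * (s + b)`; the lower
bound on `λ` turns this into `-λ * s ^ (n - 1) < s + b`. -/

namespace Real

theorem rpow_mul_rpow_le_mul_add {p q s b : ℝ} (hp : 0 < p) (hq : 0 < q) (hpq : p + q = 1)
    (hs : 0 ≤ s) (hb : 0 ≤ b) : s ^ p * b ^ q ≤ p ^ p * q ^ q * (s + b) := by
  have amgm := geom_mean_le_arith_mean2_weighted hp.le hq.le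
    (div_nonneg hs hp.le) (div_nonneg hb hq.le) hpq
  rw [div_rpow hs hp.le, div_rpow hb hq.le, div_mul_div_comm,
    mul_div_cancel₀ s hp.ne', mul_div_cancel₀ b hq.ne',
    div_le_iff₀ (by positivity)] at amgm
  linarith

theorem add_add_mul_rpow_pos {p q b lam s : ℝ} (hp : 0 < p) (hq : 0 < q) (hpq : p + q = 1)
    (hb : 0 ≤ b) (hlam : -(b ^ q) / (p ^ p * q ^ q) < lam) (hs : 0 < s) :
    0 < b + s + lam * s ^ p := by
  have hC : 0 < p ^ p * q ^ q := by positivity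
  have hlam' : -lam * (p ^ p * q ^ q) < b ^ q := by
    rw [div_lt_iff₀ hC] at hlam
    linarith
  have key : -lam * s ^ p < s + b := by
    refine lt_of_mul_lt_mul_left ?_ hC.le
    calc p ^ p * q ^ q * (-lam * s ^ p) = -lam * (p ^ p * q ^ q) * s ^ p := by ring
      _ < b ^ q * s ^ p := mul_lt_mul_of_pos_right hlam' (by positivity)
      _ = s ^ p * b ^ q := mul_comm _ _
      _ ≤ p ^ p * q ^ q * (s + b) := rpow_mul_rpow_le_mul_add hp hq hpq hs.le hb
  linarith

end Real

theorem stmt_17_general (n b lam : ℝ) (hn1 : 1 < n) (hn2 : n < 2) (hb : 0 < b)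
    (hlam1 : -(b ^ (2 - n)) / ((n - 1) ^ (n - 1) * (2 - n) ^ (2 - n)) < lam) :
    ∀ s > (0 : ℝ), b + s + lam * s ^ (n - 1) > 0 := fun _ hs =>
  Real.add_add_mul_rpow_pos (by linarith) (by linarith) (by ring) hb.le hlam1 hs

theorem stmt_17 (n b lam : ℝ) (hn1 : 1 < n) (hn2 : n < 2) (hb : 0 < b)
    (hlam1 : -(b ^ (2 - n)) / ((n - 1) ^ (n - 1) * (2 - n) ^ (2 - n)) < lam) (hlam2 : lam < 0) :
    ∀ s > (0 : ℝ), b + s + lam * s ^ (n - 1) > 0 :=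
  stmt_17_general n b lam hn1 hn2 hb hlam1
end

section
/- Let n > 2, a > 0, and λ < −(n−2)^(n−2)/((n−1)^(n−1)·a^(n−2)). Then −a + s + λ·s^(n−1) < 0 for every s > 0. -/
/-! With `c = (n-2)^(n-2) / ((n-1)^(n-1) a^(n-2))` the hypothesis says `λ < -c`, so it suffices
that `s ≤ a + c s^(n-1)` for `s ≥ 0`. The convex function `c s^p`, `p = n - 1`, has slope `1` at
`x₀ = p a / (p - 1)`, and its tangent line there is `s - a`; Bernoulli's inequality puts the
graph above that tangent. -/

namespace Real

theorem rpow_add_mul_sub_le_rpow {p x s : ℝ} (hp : 1 ≤ p) (hx : 0 < x) (hs : 0 ≤ s) :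
    x ^ p + p * x ^ (p - 1) * (s - x) ≤ s ^ p := by
  have bernoulli := one_add_mul_self_le_rpow_one_add (s := s / x - 1) (by
    have : 0 ≤ s / x := by positivity
    linarith) hp
  rw [add_sub_cancel, div_rpow hs hx.le, le_div_iff₀ (by positivity)] at bernoulli
  calc x ^ p + p * x ^ (p - 1) * (s - x) = (1 + p * (s / x - 1)) * x ^ p := by
        rw [rpow_sub_one hx.ne']; field_simp
    _ ≤ s ^ p := bernoulli

theorem le_add_mul_rpow {p a s : ℝ} (hp : 1 < p) (ha : 0 < a) (hs : 0 ≤ s) :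
    s ≤ a + (p - 1) ^ (p - 1) / (p ^ p * a ^ (p - 1)) * s ^ p := by
  have hp₀ : 0 < p := by linarith
  have hp₁ : 0 < p - 1 := by linarith
  set c := (p - 1) ^ (p - 1) / (p ^ p * a ^ (p - 1)) with hc
  have hc₀ : 0 ≤ c := by positivity
  set x₀ := p * a / (p - 1) with hx₀
  have hx₀_pos : 0 < x₀ := by positivity
  have hslope : c * p * x₀ ^ (p - 1) = 1 := by
    rw [hc, hx₀, div_rpow (by positivity) hp₁.le, mul_rpow hp₀.le ha.le, rpow_sub_one hp₀.ne' p]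
    field_simp
  have hvalue : c * x₀ ^ p = x₀ / p := by
    rw [rpow_sub_one hx₀_pos.ne'] at hslope
    field_simp at hslope ⊢
    linarith
  have hx₀a : x₀ - x₀ / p = a := by
    rw [hx₀]; field_simp
  calc s = a + (c * x₀ ^ p + c * p * x₀ ^ (p - 1) * (s - x₀)) := by
        rw [hvalue, hslope]; linarith
    _ = a + c * (x₀ ^ p + p * x₀ ^ (p - 1) * (s - x₀)) := by ring
    _ ≤ a + c * s ^ p := by gcongr; exact rpow_add_mul_sub_le_rpow hp.le hx₀_pos hs

end Real

theorem stmt_18 (n a lam : ℝ) (hn : 2 < n) (ha : 0 < a)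
    (hlam : lam < -((n - 2) ^ (n - 2)) / ((n - 1) ^ (n - 1) * a ^ (n - 2))) :
    ∀ s > (0 : ℝ), -a + s + lam * s ^ (n - 1) < 0 := by
  intro s hs
  have tangent := Real.le_add_mul_rpow (p := n - 1) (by linarith) ha hs.le
  rw [show n - 1 - 1 = n - 2 by ring] at tangent
  have hlam_mul := mul_lt_mul_of_pos_right hlam (Real.rpow_pos_of_pos hs (n - 1))
  rw [neg_div, neg_mul] at hlam_mul
  linarith
end

section
/- Let 0 < m < 1, n > m, λ > 0, and μ > 0. Then there exists c₀ > 0 such that for every c ∈ (0, c₀] and every t ∈ (0, 1] one has μ·c·t ≤ c^m·t^m − c^(m+1)·t^(m+1) − λ·c^n·t^n. -/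
/-! Put `s = c t`. Dividing by `s ^ m`, the inequality becomes
`μ s ^ (1 - m) + s + λ s ^ (n - m) ≤ 1`, and every term on the left tends to `0` as `s → 0⁺`
because its exponent is positive. -/

open Filter Topology Set

lemma Real.tendsto_rpow_nhdsGT_zero {r : ℝ} (hr : 0 < r) :
    Tendsto (fun s : ℝ => s ^ r) (𝓝[>] 0) (𝓝 0) := by
  have h := Real.continuousAt_rpow_const 0 r (Or.inr hr.le)
  rw [ContinuousAt, Real.zero_rpow hr.ne'] at h
  exact h.mono_left nhdsWithin_le_nhds

lemma Real.rpow_mul_add_rpow_sub {s : ℝ} (hs : 0 < s) (m μ lam n : ℝ) :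
    s ^ m * (μ * s ^ (1 - m) + s + lam * s ^ (n - m)) = μ * s + s ^ (m + 1) + lam * s ^ n := by
  have h₁ : s ^ m * s ^ (1 - m) = s := by rw [← Real.rpow_add hs]; norm_num
  have h₂ : s ^ m * s = s ^ (m + 1) := by rw [Real.rpow_add hs, Real.rpow_one]
  have h₃ : s ^ m * s ^ (n - m) = s ^ n := by rw [← Real.rpow_add hs]; ring_nf
  linear_combination μ * h₁ + h₂ + lam * h₃

lemma eventually_mul_le_rpow_sub {m n : ℝ} (hm : m < 1) (hnm : m < n) (μ lam : ℝ) :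
    ∀ᶠ s in 𝓝[>] (0 : ℝ), μ * s ≤ s ^ m - s ^ (m + 1) - lam * s ^ n := by
  have hlim :
      Tendsto (fun s : ℝ => μ * s ^ (1 - m) + s + lam * s ^ (n - m)) (𝓝[>] 0) (𝓝 0) := by
    simpa using ((Real.tendsto_rpow_nhdsGT_zero (sub_pos.2 hm)).const_mul μ).add
      (tendsto_nhdsWithin_of_tendsto_nhds tendsto_id) |>.add
      ((Real.tendsto_rpow_nhdsGT_zero (sub_pos.2 hnm)).const_mul lam)
  filter_upwards [hlim.eventually (gt_mem_nhds one_pos), self_mem_nhdsWithin] with s hs hs0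
  have hsm : 0 < s ^ m := Real.rpow_pos_of_pos hs0 m
  nlinarith [Real.rpow_mul_add_rpow_sub hs0 m μ lam n]

theorem stmt_19_general (m n lam μ : ℝ) (hm2 : m < 1) (hnm : n > m) :
    ∃ c₀ > (0 : ℝ), ∀ c : ℝ, 0 < c → c ≤ c₀ → ∀ t : ℝ, 0 < t → t ≤ 1 →
      μ * c * t ≤ c ^ m * t ^ m - c ^ (m + 1) * t ^ (m + 1) - lam * c ^ n * t ^ n := by
  obtain ⟨c₀, hc₀, hsmall⟩ :=
    mem_nhdsGT_iff_exists_Ioc_subset.1 (eventually_mul_le_rpow_sub hm2 hnm μ lam)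
  refine ⟨c₀, hc₀, fun c hc hcc₀ t ht ht1 => ?_⟩
  have hct : c * t ∈ Ioc 0 c₀ :=
    ⟨mul_pos hc ht, (mul_le_of_le_one_right hc.le ht1).trans hcc₀⟩
  have key : μ * (c * t) ≤ (c * t) ^ m - (c * t) ^ (m + 1) - lam * (c * t) ^ n := hsmall hct
  simp only [Real.mul_rpow hc.le ht.le] at key
  linear_combination key

theorem stmt_19 (m n lam μ : ℝ) (hm1 : 0 < m) (hm2 : m < 1) (hnm : n > m)
    (hlam : 0 < lam) (hμ : 0 < μ) :
    ∃ c₀ > (0 : ℝ), ∀ c : ℝ, 0 < c → c ≤ c₀ → ∀ t : ℝ, 0 < t → t ≤ 1 →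
      μ * c * t ≤ c ^ m * t ^ m - c ^ (m + 1) * t ^ (m + 1) - lam * c ^ n * t ^ n :=
  stmt_19_general m n lam μ hm2 hnm
end
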